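/- Let Π be a finite projective plane of even order n ≥ 2 which admits an orthogonal polarity. Then Π contains at least (n³ - n)/6 - (n+1)(n/2 - 1) Fano subplanes; in particular, the number of Fano subplanes of Π is at least c·n³ for some absolute constant c > 0 (for all sufficiently large even n). -/

import Mathlib

/-!
For even order `n`, if the pole of a line `l` is not on `l`, then `q ↦ π q ∩ l` is an involution
of the `n + 1` points of `l`, so it has a fixed point: every line carries an absolute point.
Joining a non-absolute point to the `n + 1` absolute points then reaches each of the `n + 1`
lines through it exactly once, which forces the absolute points to be the points of one line `ℓ`.

Conjugacy among the non-absolute points is a locally linear graph (the common neighbour of an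
edge `p q` is `π p ∩ π q`) in which every vertex except the pole `z` of `ℓ` has degree `n`, so it
has `(n³ - n) / 6` triangles. A triangle `a, b, c`, the points `π a ∩ ℓ, π b ∩ ℓ, π c ∩ ℓ` and `z`
span a Fano subplane, and the triangle is recovered from it as its points off `ℓ` other than `z`.
-/

/-- A polarity of a projective plane `(P, L)` is an incidence-preserving involutive
correlation.  We encode it as an equivalence `π : P ≃ L` (points to lines; the map on lines
is then `π.symm`, so that the composite is the identity), together with the incidence
condition `∀ p q, p ∈ π q ↔ q ∈ π p` (equivalently, `p ∈ l ↔ π(l) ∈ π(p)`).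
A point `p` is *absolute* when `p ∈ π p`.

`IsFanoSubplane ps ls` says the 7 points `ps` and 7 lines `ls`, with incidence inherited
from the ambient plane, form a projective plane of order 2 (a Fano subplane): any two of
the points lie on exactly one of the lines, any two of the lines meet in exactly one of the
points, each line carries exactly 3 of the points and each point lies on exactly 3 of the
lines. -/
def IsFanoSubplane {P L : Type*} [Membership P L] (ps : Set P) (ls : Set L) : Prop :=
  ps.ncard = 7 ∧ ls.ncard = 7 ∧
  (∀ p ∈ ps, ∀ q ∈ ps, p ≠ q → ∃! l, l ∈ ls ∧ p ∈ l ∧ q ∈ l) ∧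
  (∀ l ∈ ls, ∀ m ∈ ls, l ≠ m → ∃! p, p ∈ ps ∧ p ∈ l ∧ p ∈ m) ∧
  (∀ l ∈ ls, {p | p ∈ ps ∧ p ∈ l}.ncard = 3) ∧
  (∀ p ∈ ps, {l | l ∈ ls ∧ p ∈ l}.ncard = 3)

open Function Finset SimpleGraph Configuration

/-- The lines of the Fano plane on `Fin 7`, labelled so that `i ↦ fanoLine i` is a polarity. -/
def fanoLine : Fin 7 → Finset (Fin 7) :=
  ![{1, 2, 3}, {0, 2, 4}, {0, 1, 5}, {0, 3, 6}, {1, 4, 6}, {2, 5, 6}, {3, 4, 5}]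

lemma mem_fanoLine_comm (i j : Fin 7) : i ∈ fanoLine j ↔ j ∈ fanoLine i := by
  revert i j; decide

lemma card_fanoLine (i : Fin 7) : #(fanoLine i) = 3 := by
  revert i; decide

lemma eq_of_forall_mem_fanoLine_iff {i j : Fin 7} :
    (∀ k, i ∈ fanoLine k ↔ j ∈ fanoLine k) → i = j := by
  revert i j; decide

lemma existsUnique_mem_fanoLine {i j : Fin 7} (h : i ≠ j) :
    ∃! k, i ∈ fanoLine k ∧ j ∈ fanoLine k := by
  revert i j; simp only [ExistsUnique]; decide

lemma Function.Injective.existsUnique_mem_range_iff {α β : Type*} {f : α → β} (hf : Injective f)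
    {p : β → Prop} :
    (∃! b, b ∈ Set.range f ∧ p b) ↔ ∃! a, p (f a) := by
  simp [ExistsUnique, hf.eq_iff]

theorem isFanoSubplane_range {P L : Type*} [Membership P L] {x : Fin 7 → P} {y : Fin 7 → L}
    (h : ∀ i j, x i ∈ y j ↔ i ∈ fanoLine j) : IsFanoSubplane (Set.range x) (Set.range y) := by
  have hx : Injective x := fun i j hij ↦
    eq_of_forall_mem_fanoLine_iff fun k ↦ by rw [← h, ← h, hij]
  have hy : Injective y := fun i j hij ↦ eq_of_forall_mem_fanoLine_iff fun k ↦ by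
    rw [mem_fanoLine_comm, ← h, hij, h, mem_fanoLine_comm]
  refine ⟨?_, ?_, ?_, ?_, ?_, ?_⟩
  · rw [← Set.image_univ, Set.ncard_image_of_injective _ hx]; simp
  · rw [← Set.image_univ, Set.ncard_image_of_injective _ hy]; simp
  · rintro _ ⟨i, rfl⟩ _ ⟨j, rfl⟩ hij
    simpa only [hy.existsUnique_mem_range_iff, h] using existsUnique_mem_fanoLine (hx.ne_iff.1 hij)
  · rintro _ ⟨i, rfl⟩ _ ⟨j, rfl⟩ hij
    simpa only [hx.existsUnique_mem_range_iff, h, mem_fanoLine_comm _ i, mem_fanoLine_comm _ j]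
      using existsUnique_mem_fanoLine (hy.ne_iff.1 hij)
  · rintro _ ⟨j, rfl⟩
    have : {p | p ∈ Set.range x ∧ p ∈ y j} = x '' fanoLine j := by
      ext p; constructor
      · rintro ⟨⟨i, rfl⟩, hi⟩; exact ⟨i, (h i j).1 hi, rfl⟩
      · rintro ⟨i, hi, rfl⟩; exact ⟨⟨i, rfl⟩, (h i j).2 hi⟩
    rw [this, Set.ncard_image_of_injective _ hx, Set.ncard_coe_finset, card_fanoLine]
  · rintro _ ⟨i, rfl⟩
    have : {l | l ∈ Set.range y ∧ x i ∈ l} = y '' fanoLine i := by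
      ext l; constructor
      · rintro ⟨⟨k, rfl⟩, hk⟩; exact ⟨k, (mem_fanoLine_comm _ _).1 ((h i k).1 hk), rfl⟩
      · rintro ⟨k, hk, rfl⟩; exact ⟨⟨k, rfl⟩, (h i k).2 ((mem_fanoLine_comm _ _).1 hk)⟩
    rw [this, Set.ncard_image_of_injective _ hy, Set.ncard_coe_finset, card_fanoLine]

theorem SimpleGraph.edgeDisjointTriangles_of_subsingleton_commonNeighbors {V : Type*}
    {G : SimpleGraph V} (h : ∀ ⦃a b⦄, G.Adj a b → (G.commonNeighbors a b).Subsingleton) :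
    G.EdgeDisjointTriangles := by
  classical
  intro s hs t ht hst
  by_contra hne
  obtain ⟨a, ⟨has, hat⟩, b, ⟨hbs, hbt⟩, hab⟩ := Set.not_subsingleton_iff.1 hne
  rw [mem_cliqueSet_iff] at hs ht
  obtain ⟨c, hct, hcab⟩ : ∃ c ∈ t, c ∉ ({a, b} : Finset V) :=
    exists_mem_notMem_of_card_lt_card (by rw [ht.card_eq]; exact (card_le_two).trans_lt (by omega))
  refine hst (eq_of_subset_of_card_le (fun x hx ↦ ?_) (by rw [hs.card_eq, ht.card_eq]))
  by_cases hxab : x ∈ ({a, b} : Finset V)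
  · rcases mem_insert.1 hxab with rfl | hxb
    · exact hat
    · rwa [mem_singleton.1 hxb]
  · simp only [mem_insert, mem_singleton, not_or] at hxab hcab
    have hx : x ∈ G.commonNeighbors a b :=
      (G.mem_commonNeighbors).2 ⟨hs.1 has hx (Ne.symm hxab.1), hs.1 hbs hx (Ne.symm hxab.2)⟩
    have hc : c ∈ G.commonNeighbors a b :=
      (G.mem_commonNeighbors).2 ⟨ht.1 hat hct (Ne.symm hcab.1), ht.1 hbt hct (Ne.symm hcab.2)⟩
    rwa [h (hs.1 has hbs hab) hx hc]

namespace Configuration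

variable {P L : Type*} [Membership P L]

theorem Nondegenerate.eq_of_mem_of_mem [Nondegenerate P L] {p q : P} {l m : L} (hpl : p ∈ l)
    (hpm : p ∈ m) (hql : q ∈ l) (hqm : q ∈ m) (hlm : l ≠ m) : p = q :=
  (Nondegenerate.eq_or_eq hpl hql hpm hqm).resolve_right hlm

theorem Nondegenerate.line_eq_of_mem_of_mem [Nondegenerate P L] {p q : P} {l m : L} (hpl : p ∈ l)
    (hpm : p ∈ m) (hql : q ∈ l) (hqm : q ∈ m) (hpq : p ≠ q) : l = m :=
  (Nondegenerate.eq_or_eq hpl hql hpm hqm).resolve_left hpq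

theorem Nondegenerate.ne_of_mem_of_notMem [Nondegenerate P L] {c d e : P} {l m n : L}
    (hcl : c ∈ l) (hcm : c ∈ m) (hlm : l ≠ m) (hdl : d ∈ l) (hdn : d ∈ n) (hem : e ∈ m)
    (hcn : c ∉ n) : d ≠ e :=
  fun h ↦ hcn (Nondegenerate.eq_of_mem_of_mem hdl (h ▸ hem) hcl hcm hlm ▸ hdn)

open scoped Classical in
theorem ProjectivePlane.card_points_on [ProjectivePlane P L] [Fintype P] [Fintype L] (l : L) :
    #{p : P | p ∈ l} = order P L + 1 := by
  rw [← pointCount_eq P l, pointCount, Nat.card_eq_fintype_card, Fintype.card_subtype]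

open scoped Classical in
theorem ProjectivePlane.card_lines_through [ProjectivePlane P L] [Fintype P] [Fintype L] (p : P) :
    #{l : L | p ∈ l} = order P L + 1 := by
  rw [← lineCount_eq L p, lineCount, Nat.card_eq_fintype_card, Fintype.card_subtype]

def IsPolarity (π : P ≃ L) : Prop :=
  ∀ p q : P, p ∈ π q ↔ q ∈ π p

namespace IsPolarity

variable {π : P ≃ L}

/-- The polarity graph with its absolute points isolated; this makes it locally linear. -/
def graph (hπ : IsPolarity π) : SimpleGraph P where
  Adj p q := p ∈ π q ∧ p ∉ π p ∧ q ∉ π q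
  symm := ⟨fun _ _ h ↦ ⟨(hπ _ _).1 h.1, h.2.2, h.2.1⟩⟩
  loopless := ⟨fun _ h ↦ h.2.1 h.1⟩

theorem graph_adj (hπ : IsPolarity π) {p q : P} :
    hπ.graph.Adj p q ↔ p ∈ π q ∧ p ∉ π p ∧ q ∉ π q :=
  Iff.rfl

theorem notMem_self_of_triangle [Nondegenerate P L] (hπ : IsPolarity π) {p q r : P}
    (hpq : p ∈ π q) (hrp : r ∈ π p) (hrq : r ∈ π q) (hpr : p ≠ r) (hqr : q ≠ r) : r ∉ π r :=
  fun hrr ↦ hpr (Nondegenerate.eq_of_mem_of_mem hpq ((hπ _ _).1 hrp) hrq hrr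
    (π.injective.ne hqr))

theorem graph_locallyLinear [HasPoints P L] (hπ : IsPolarity π) : hπ.graph.LocallyLinear := by
  classical
  refine ⟨edgeDisjointTriangles_of_subsingleton_commonNeighbors fun p q hpq r hr r' hr' ↦ ?_,
    fun p q hpq ↦ ?_⟩
  · rw [graph_adj] at hpq
    have hne : π p ≠ π q := fun h ↦ hpq.2.1 (h ▸ hpq.1)
    simp only [mem_commonNeighbors, graph_adj] at hr hr'
    exact Nondegenerate.eq_of_mem_of_mem ((hπ _ _).1 hr.1.1) ((hπ _ _).1 hr.2.1)
      ((hπ _ _).1 hr'.1.1) ((hπ _ _).1 hr'.2.1) hne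
  · obtain ⟨hpq', hp, hq⟩ := hπ.graph_adj.1 hpq
    have hne : π p ≠ π q := fun h ↦ hp (h ▸ hpq')
    obtain ⟨r, hrp, hrq⟩ : ∃ r, r ∈ π p ∧ r ∈ π q := ⟨_, HasPoints.mkPoint_ax (P := P) hne⟩
    have hpr : p ≠ r := fun h ↦ hp (h ▸ hrp)
    have hqr : q ≠ r := fun h ↦ hq (h ▸ hrq)
    have hr := hπ.notMem_self_of_triangle hpq' hrp hrq hpr hqr
    refine ⟨{p, q, r}, is3Clique_triple_iff.2 ⟨⟨hpq', hp, hq⟩, ⟨(hπ _ _).1 hrp, hp, hr⟩,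
      ⟨(hπ _ _).1 hrq, hq, hr⟩⟩, by simp, by simp⟩

section Finite

open scoped Classical

variable [Fintype P] [Fintype L] [ProjectivePlane P L]

theorem exists_mem_self_of_even_order (hπ : IsPolarity π) (hn : Even (ProjectivePlane.order P L))
    (l : L) : ∃ p ∈ l, p ∈ π p := by
  by_cases hpole : π.symm l ∈ l
  · exact ⟨_, hpole, by rwa [π.apply_symm_apply]⟩
  have hne (q : P) (hq : q ∈ l) : π q ≠ l := fun h ↦ hpole (by rwa [← h, π.symm_apply_apply, h])
  let σ (q : {q // q ∈ l}) : {q // q ∈ l} :=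
    ⟨HasPoints.mkPoint (P := P) (hne q q.2), (HasPoints.mkPoint_ax (P := P) (hne q q.2)).2⟩
  have hσ : Involutive σ := fun q ↦ Subtype.ext <|
    Nondegenerate.eq_of_mem_of_mem (HasPoints.mkPoint_ax _).1 (HasPoints.mkPoint_ax _).2
      ((hπ _ _).1 (HasPoints.mkPoint_ax _).1) q.2 (hne _ (σ q).2)
  have hodd : ¬2 ∣ Fintype.card {q // q ∈ l} := by
    rw [Fintype.card_subtype, ProjectivePlane.card_points_on, ← even_iff_two_dvd,
      Nat.even_add_one, not_not]
    exact hn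
  obtain ⟨q, hq⟩ := Equiv.Perm.exists_fixed_point_of_prime (p := 2) (n := 1) hodd
    (σ := hσ.toPerm) (Equiv.ext fun q ↦ by simp [sq, hσ q])
  have hfix : HasPoints.mkPoint (P := P) (hne q q.2) = q := congrArg Subtype.val hq
  exact ⟨q, q.2, by simpa only [hfix] using (HasPoints.mkPoint_ax (P := P) (hne q q.2)).1⟩

theorem eq_of_mem_self_of_mem_line (hπ : IsPolarity π) (hn : Even (ProjectivePlane.order P L))
    (habs : #{p : P | p ∈ π p} = ProjectivePlane.order P L + 1) {p : P} (hp : p ∉ π p) {m : L}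
    (hpm : p ∈ m) {s t : P} (hs : s ∈ π s) (ht : t ∈ π t) (hsm : s ∈ m) (htm : t ∈ m) : s = t := by
  set A : Finset P := {p : P | p ∈ π p}
  have hne (u : P) (hu : u ∈ A) : u ≠ p := fun h ↦ hp (h ▸ (mem_filter.1 hu).2)
  let φ (u : P) : L := if h : u ≠ p then HasLines.mkLine h else m
  have hφ (u : P) (hu : u ∈ A) (l : L) (hul : u ∈ l) (hpl : p ∈ l) : φ u = l := by
    simp only [φ, dif_pos (hne u hu)]
    exact Nondegenerate.line_eq_of_mem_of_mem (HasLines.mkLine_ax (hne u hu)).1 hul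
      (HasLines.mkLine_ax (hne u hu)).2 hpl (hne u hu)
  have hsurj : ({l : L | p ∈ l} : Finset L) ⊆ A.image φ := by
    intro l hl
    obtain ⟨u, hul, hu⟩ := hπ.exists_mem_self_of_even_order hn l
    have huA : u ∈ A := by simpa [A] using hu
    exact mem_image.2 ⟨u, huA, hφ u huA l hul (by simpa using hl)⟩
  have hinj : Set.InjOn φ A := injOn_of_card_image_eq <| card_image_le.antisymm <| by
    rw [habs, ← ProjectivePlane.card_lines_through p]
    exact card_le_card hsurj
  have hsA : s ∈ A := by simpa [A] using hs
  have htA : t ∈ A := by simpa [A] using ht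
  exact hinj hsA htA ((hφ s hsA m hsm hpm).trans (hφ t htA m htm hpm).symm)

theorem exists_line_mem_self_iff (hπ : IsPolarity π) (hn : Even (ProjectivePlane.order P L))
    (habs : #{p : P | p ∈ π p} = ProjectivePlane.order P L + 1) :
    ∃ ℓ : L, ∀ p, p ∈ π p ↔ p ∈ ℓ := by
  obtain ⟨s, hs, t, ht, hst⟩ := one_lt_card.1 <| by
    rw [habs]; have := ProjectivePlane.one_lt_order P L; omega
  simp only [mem_filter, mem_univ, true_and] at hs ht
  obtain ⟨hsℓ, htℓ⟩ := HasLines.mkLine_ax (L := L) hst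
  set ℓ := HasLines.mkLine (L := L) hst
  have hℓ (p : P) (hp : p ∈ ℓ) : p ∈ π p := by
    by_contra h
    exact hst (hπ.eq_of_mem_self_of_mem_line hn habs h hp hs ht hsℓ htℓ)
  have hA : ({p : P | p ∈ ℓ} : Finset P) = ({p : P | p ∈ π p} : Finset P) := by
    refine eq_of_subset_of_card_le (fun p hp ↦ ?_) (by rw [habs, ProjectivePlane.card_points_on])
    simp only [mem_filter, mem_univ, true_and] at hp ⊢
    exact hℓ p hp
  exact ⟨ℓ, fun p ↦ by simpa using (Finset.ext_iff.1 hA p).symm⟩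

section AbsoluteLine

variable {ℓ : L}

theorem notMem_of_apply_eq (hπ : IsPolarity π) (hℓ : ∀ p, p ∈ π p ↔ p ∈ ℓ) {z : P}
    (hz : π z = ℓ) : z ∉ ℓ := by
  intro hzℓ
  obtain ⟨q, hq, hqz⟩ := exists_mem_ne (s := ({p : P | p ∈ ℓ} : Finset P))
    (by rw [ProjectivePlane.card_points_on]; have := ProjectivePlane.one_lt_order P L; omega) z
  rw [mem_filter] at hq
  have hzq : z ∈ π q := (hπ _ _).2 (hz ▸ hq.2)
  exact hqz (π.injective ((Nondegenerate.line_eq_of_mem_of_mem ((hℓ q).2 hq.2) hq.2 hzq hzℓ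
    hqz).trans hz.symm))

theorem exists_isFanoSubplane_of_isNClique (hπ : IsPolarity π) (hℓ : ∀ p, p ∈ π p ↔ p ∈ ℓ)
    {s : Finset P} (hs : hπ.graph.IsNClique 3 s) :
    ∃ F : Set P × Set L, IsFanoSubplane F.1 F.2 ∧ {p | p ∈ F.1 ∧ p ∉ ℓ ∧ π p ≠ ℓ} = s := by
  obtain ⟨a, b, c, hab, hac, hbc, rfl⟩ := is3Clique_iff.1 hs
  obtain ⟨hab, ha, hb⟩ := hπ.graph_adj.1 hab
  obtain ⟨hac, -, hc⟩ := hπ.graph_adj.1 hac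
  obtain ⟨hbc, -, -⟩ := hπ.graph_adj.1 hbc
  have hπab : π a ≠ π b := fun h ↦ ha (by rwa [h])
  have hπac : π a ≠ π c := fun h ↦ ha (by rwa [h])
  have hπbc : π b ≠ π c := fun h ↦ hb (by rwa [h])
  rw [hℓ] at ha hb hc
  have hπa : π a ≠ ℓ := fun h ↦ hb (h ▸ (hπ _ _).1 hab)
  have hπb : π b ≠ ℓ := fun h ↦ ha (h ▸ hab)
  have hπc : π c ≠ ℓ := fun h ↦ ha (h ▸ hac)
  obtain ⟨d, hda, hdℓ⟩ : ∃ d, d ∈ π a ∧ d ∈ ℓ := ⟨_, HasPoints.mkPoint_ax (P := P) hπa⟩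
  obtain ⟨e, heb, heℓ⟩ : ∃ e, e ∈ π b ∧ e ∈ ℓ := ⟨_, HasPoints.mkPoint_ax (P := P) hπb⟩
  obtain ⟨f, hfc, hfℓ⟩ : ∃ f, f ∈ π c ∧ f ∈ ℓ := ⟨_, HasPoints.mkPoint_ax (P := P) hπc⟩
  have hde : d ≠ e := Nondegenerate.ne_of_mem_of_notMem ((hπ _ _).1 hac) ((hπ _ _).1 hbc) hπab
    hda hdℓ heb hc
  have hdf : d ≠ f := Nondegenerate.ne_of_mem_of_notMem ((hπ _ _).1 hab) hbc hπac hda hdℓ hfc hb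
  have hef : e ≠ f := Nondegenerate.ne_of_mem_of_notMem hab hac hπbc heb heℓ hfc ha
  obtain ⟨z, hz⟩ := π.surjective ℓ
  have hzℓ : z ∉ ℓ := hπ.notMem_of_apply_eq hℓ hz
  set x : Fin 7 → P := ![a, b, c, d, e, f, z]
  have hx : ∀ i j, x i ∈ π (x j) ↔ i ∈ fanoLine j := by
    have hπ' : ∀ p q, p ∈ π q ↔ q ∈ π p := hπ
    have hinj : ∀ p q, π p = π q → p = q := fun _ _ h ↦ π.injective h
    have uniq {p q : P} {m : L} (hm : m ≠ ℓ) (hpm : p ∈ m) (hqm : q ∈ m) (hpℓ : p ∈ ℓ)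
        (hqℓ : q ∈ ℓ) : p = q :=
      Nondegenerate.eq_of_mem_of_mem hpm hpℓ hqm hqℓ hm
    suffices h : ∀ i j, i ≤ j → (x i ∈ π (x j) ↔ i ∈ fanoLine j) from fun i j ↦
      (le_total i j).elim (h i j) fun hji ↦ by rw [hπ', mem_fanoLine_comm]; exact h j i hji
    -- the non-incidences hold because a line other than `ℓ` meets `ℓ` only once
    intro i j hij
    fin_cases i <;> fin_cases j <;> simp [x, fanoLine] at hij ⊢ <;> grind
  refine ⟨(Set.range x, Set.range (π ∘ x)), isFanoSubplane_range hx, ?_⟩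
  ext p
  simp [x]
  grind

theorem graph_degree_eq (hπ : IsPolarity π) (hℓ : ∀ p, p ∈ π p ↔ p ∈ ℓ) (p : P) :
    hπ.graph.degree p = if p ∉ ℓ ∧ π p ≠ ℓ then ProjectivePlane.order P L else 0 := by
  rw [← card_neighborFinset_eq_degree]
  split_ifs with hp
  · obtain ⟨hp, hpℓ⟩ := hp
    obtain ⟨htp, htℓ⟩ := HasPoints.mkPoint_ax (P := P) hpℓ
    have : hπ.graph.neighborFinset p =
        ({q : P | q ∈ π p} : Finset P).erase (HasPoints.mkPoint hpℓ) := by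
      ext q
      simp only [mem_neighborFinset, graph_adj, mem_erase, mem_filter, mem_univ, true_and, hℓ]
      constructor
      · rintro ⟨hpq, -, hq⟩
        exact ⟨fun h ↦ hq (h ▸ htℓ), (hπ _ _).1 hpq⟩
      · rintro ⟨hqt, hqp⟩
        exact ⟨(hπ _ _).1 hqp, hp,
          fun hq ↦ hqt (Nondegenerate.eq_of_mem_of_mem hqp hq htp htℓ hpℓ)⟩
    rw [this, card_erase_of_mem (by simpa using htp), ProjectivePlane.card_points_on,
      Nat.add_sub_cancel]
  · rw [card_eq_zero, eq_empty_iff_forall_notMem]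
    intro q hq
    obtain ⟨hpq, hpp, hqq⟩ := hπ.graph_adj.1 ((mem_neighborFinset _ _ _).1 hq)
    rw [not_and_or, not_not, not_not] at hp
    rcases hp with hp | hp
    · exact hpp ((hℓ p).2 hp)
    · exact hqq ((hℓ q).2 (hp ▸ (hπ _ _).1 hpq))

theorem two_mul_card_edgeFinset_graph (hπ : IsPolarity π) (hℓ : ∀ p, p ∈ π p ↔ p ∈ ℓ) :
    2 * #hπ.graph.edgeFinset =
      ProjectivePlane.order P L * (ProjectivePlane.order P L ^ 2 - 1) := by
  set S : Finset P := {p : P | p ∉ ℓ ∧ π p ≠ ℓ}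
  have hS : S = ({p : P | p ∈ ℓ} : Finset P)ᶜ.erase (π.symm ℓ) := by
    ext p
    simp [S, π.eq_symm_apply, and_comm]
  have hcard : #S = ProjectivePlane.order P L ^ 2 - 1 := by
    rw [hS, card_erase_of_mem (by simpa using hπ.notMem_of_apply_eq hℓ (π.apply_symm_apply ℓ)),
      card_compl, ProjectivePlane.card_points P L, ProjectivePlane.card_points_on]
    omega
  rw [← sum_degrees_eq_twice_card_edges]
  simp_rw [hπ.graph_degree_eq hℓ]
  rw [← sum_filter, sum_const, hcard, smul_eq_mul, mul_comm]

theorem card_cliqueFinset_graph_le (hπ : IsPolarity π) (hℓ : ∀ p, p ∈ π p ↔ p ∈ ℓ) :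
    #(hπ.graph.cliqueFinset 3) ≤ {F : Set P × Set L | IsFanoSubplane F.1 F.2}.ncard := by
  choose! F hF hFs using fun s (hs : hπ.graph.IsNClique 3 s) ↦
    hπ.exists_isFanoSubplane_of_isNClique hℓ hs
  rw [← Set.ncard_coe_finset]
  refine Set.ncard_le_ncard_of_injOn F (fun s hs ↦ hF s (mem_cliqueFinset_iff.1 hs))
    (fun s hs t ht hst ↦ ?_) (Set.toFinite _)
  rw [mem_coe, mem_cliqueFinset_iff] at hs ht
  exact coe_injective ((hFs s hs).symm.trans (hst ▸ hFs t ht))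

end AbsoluteLine

theorem order_pow_three_sub_order_le (hπ : IsPolarity π)
    (hn : Even (ProjectivePlane.order P L))
    (habs : {p : P | p ∈ π p}.ncard = ProjectivePlane.order P L + 1) :
    (ProjectivePlane.order P L : ℤ) ^ 3 - ProjectivePlane.order P L ≤
      6 * {F : Set P × Set L | IsFanoSubplane F.1 F.2}.ncard := by
  obtain ⟨ℓ, hℓ⟩ := hπ.exists_line_mem_self_iff hn <| by
    rw [← Set.ncard_coe_finset, coe_filter]; simpa using habs
  have hedges := hπ.two_mul_card_edgeFinset_graph hℓ
  have htriangles := hπ.graph_locallyLinear.card_edgeFinset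
  have hfano := hπ.card_cliqueFinset_graph_le hℓ
  have h1 : 1 ≤ ProjectivePlane.order P L ^ 2 :=
    Nat.one_le_pow _ _ (by have := ProjectivePlane.one_lt_order P L; omega)
  zify [h1] at hedges htriangles hfano
  linarith

end Finite

end IsPolarity

end Configuration

/-- Every finite projective plane of even order `n ≥ 2` admitting an
orthogonal polarity contains at least `(n³ - n)/6 - (n + 1)(n/2 - 1)` Fano subplanes; in
particular there is an absolute constant `c > 0` such that for all sufficiently large even
`n`, every such plane contains at least `c · n³` Fano subplanes. -/
theorem fano_subplane_count_lower_bound :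
    (∀ (P L : Type) [Membership P L] [Fintype P] [Fintype L]
        [Configuration.ProjectivePlane P L] (n : ℕ),
        Configuration.ProjectivePlane.order P L = n → Even n → 2 ≤ n →
        ∀ π : P ≃ L, (∀ p q : P, p ∈ π q ↔ q ∈ π p) →
          {x : P | x ∈ π x}.ncard = n + 1 →
          ((n : ℤ) ^ 3 - n) / 6 - (n + 1) * ((n : ℤ) / 2 - 1) ≤
            ({x : Set P × Set L | IsFanoSubplane x.1 x.2}.ncard : ℤ)) ∧
    ∃ c : ℝ, 0 < c ∧ ∃ N : ℕ,
      ∀ (P L : Type) [Membership P L] [Fintype P] [Fintype L]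
        [Configuration.ProjectivePlane P L] (n : ℕ),
        Configuration.ProjectivePlane.order P L = n → Even n → N ≤ n →
        ∀ π : P ≃ L, (∀ p q : P, p ∈ π q ↔ q ∈ π p) →
          {x : P | x ∈ π x}.ncard = n + 1 →
          c * (n : ℝ) ^ 3 ≤ ({x : Set P × Set L | IsFanoSubplane x.1 x.2}.ncard : ℝ) := by
  refine ⟨fun P L _ _ _ _ n hord hev hn π hπ habs ↦ ?_,
    1 / 12, by norm_num, 2, fun P L _ _ _ _ n hord hev hn π hπ habs ↦ ?_⟩
  · have key := IsPolarity.order_pow_three_sub_order_le hπ (hord ▸ hev) (hord ▸ habs)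
    rw [hord] at key
    have hdiv : ((n : ℤ) ^ 3 - n) / 6 ≤ {x : Set P × Set L | IsFanoSubplane x.1 x.2}.ncard :=
      Int.ediv_le_of_le_mul (by norm_num) (by linarith)
    have : 0 ≤ ((n : ℤ) + 1) * ((n : ℤ) / 2 - 1) := mul_nonneg (by positivity) (by omega)
    linarith
  · have key := IsPolarity.order_pow_three_sub_order_le hπ (hord ▸ hev) (hord ▸ habs)
    rw [hord] at key
    have key' : (n : ℝ) ^ 3 - n ≤ 6 * {x : Set P × Set L | IsFanoSubplane x.1 x.2}.ncard := by
      exact_mod_cast key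
    have hn' : (2 : ℝ) ≤ n := by exact_mod_cast hn
    have : 2 * (n : ℝ) ≤ n ^ 3 := by nlinarith [sq_nonneg ((n : ℝ) - 2)]
    linarith
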